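/- arXiv:2302.08114 — 3 statements merged into one kernel-verified Lean document; each statement's English description precedes it below -/
import Mathlib

section
/- (Multiplier identity.) Let L > 0, ε₁ > 0, and define φ(x) = ε₁ for |x| ≤ L and φ(x) = Lε₁/|x| for |x| ≥ L (so φ is Lipschitz continuous on ℝ). Let u be a smooth classical solution of u_tt − u_xx + V(x)u + a(x)u_t = 0 with smooth compactly supported data, vanishing for |x| ≥ R on each time interval [0,T]. Then for every t > 0: (d/dt) ∫_ℝ u_t(t,x) φ(x) x u_x(t,x) dx + (1/2)∫_ℝ (φ(x) + φ'(x)x) u_t(t,x)² dx + (1/2)∫_ℝ (φ(x) + φ'(x)x) u_x(t,x)² dx − (1/2)∫_ℝ (V(x)φ(x) + V(x)φ'(x)x) u(t,x)² dx − (1/2)∫_ℝ V'(x)φ(x)x u(t,x)² dx + ∫_ℝ a(x) u_t(t,x) φ(x) x u_x(t,x) dx = 0, where φ' denotes the (almost-everywhere defined) derivative of φ. -/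
open MeasureTheory

noncomputable def ut (u : ℝ → ℝ → ℝ) (t x : ℝ) : ℝ := deriv (fun s => u s x) t

noncomputable def ux (u : ℝ → ℝ → ℝ) (t x : ℝ) : ℝ := deriv (fun y => u t y) x

noncomputable def utt (u : ℝ → ℝ → ℝ) (t x : ℝ) : ℝ := deriv (fun s => ut u s x) t

noncomputable def uxx (u : ℝ → ℝ → ℝ) (t x : ℝ) : ℝ := deriv (fun y => ux u t y) x

noncomputable def Eu (V : ℝ → ℝ) (u : ℝ → ℝ → ℝ) (t : ℝ) : ℝ :=
  (1/2) * ((∫ x, (ut u t x)^2) + (∫ x, (ux u t x)^2) + ∫ x, V x * (u t x)^2)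

/-- `u` is a smooth classical solution of `u_tt - u_xx + V u + a u_t = 0` with smooth
compactly supported initial data `(u₀, u₁)`, vanishing for large `|x|` on each `[0,T]`. -/
def IsSmoothSolution (V a : ℝ → ℝ) (u : ℝ → ℝ → ℝ) (u₀ u₁ : ℝ → ℝ) : Prop :=
  ContDiff ℝ (⊤ : ℕ∞) (fun p : ℝ × ℝ => u p.1 p.2) ∧
  (∀ t > (0:ℝ), ∀ x : ℝ, utt u t x - uxx u t x + V x * u t x + a x * ut u t x = 0) ∧
  (∀ x : ℝ, u 0 x = u₀ x) ∧ (∀ x : ℝ, ut u 0 x = u₁ x) ∧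
  ContDiff ℝ (⊤ : ℕ∞) u₀ ∧ HasCompactSupport u₀ ∧
  ContDiff ℝ (⊤ : ℕ∞) u₁ ∧ HasCompactSupport u₁ ∧
  (∀ T > (0:ℝ), ∃ R > (0:ℝ), ∀ t ∈ Set.Icc (0:ℝ) T, ∀ x : ℝ, R ≤ |x| → u t x = 0)

/-- The multiplier function `φ`. -/
noncomputable def phi (L ε₁ : ℝ) (x : ℝ) : ℝ := if |x| ≤ L then ε₁ else L * ε₁ / |x|

/-- The (a.e. defined) derivative of `φ`. -/
noncomputable def phi' (L ε₁ : ℝ) (x : ℝ) : ℝ :=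
  if |x| ≤ L then 0 else -(L * ε₁) * Real.sign x / x ^ 2

/-! For `L > 0` the weight `φ(x) x = ε₁ max (-L) (min L x)` is a clamp: it is Lipschitz, with
a.e. derivative `φ + φ' x = ε₁ 𝟙[-L, L]`, so integrating by parts against it turns
`∫ φ x g g'` into `-½ ∫ (φ + φ' x) g²` for compactly supported `g`. Differentiate the momentum
`∫ u_t φ x u_x` under the integral sign (on a time interval around `t`, `u` vanishes outside a
fixed compact set), and replace `u_tt` using the equation and `u_tx` by `u_xt`: the terms
`u_x u_xx` and `u_t u_xt` are then of that form, and `V u u_x` is too, up to the `V'` term. -/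

open Set Filter Topology Function

section PartialDerivatives

variable {u : ℝ → ℝ → ℝ} {t x : ℝ}

theorem hasDerivAt_fderiv_fst (hu : DifferentiableAt ℝ (uncurry u) (t, x)) :
    HasDerivAt (fun s => u s x) (fderiv ℝ (uncurry u) (t, x) (1, 0)) t :=
  hu.hasFDerivAt.comp_hasDerivAt (f := fun s => (s, x)) t
    ((hasDerivAt_id t).prodMk (hasDerivAt_const t x))

theorem hasDerivAt_fderiv_snd (hu : DifferentiableAt ℝ (uncurry u) (t, x)) :
    HasDerivAt (u t) (fderiv ℝ (uncurry u) (t, x) (0, 1)) x :=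
  hu.hasFDerivAt.comp_hasDerivAt (f := fun y => (t, y)) x
    ((hasDerivAt_const x t).prodMk (hasDerivAt_id x))

theorem ut_eq_fderiv (hu : DifferentiableAt ℝ (uncurry u) (t, x)) :
    ut u t x = fderiv ℝ (uncurry u) (t, x) (1, 0) :=
  (hasDerivAt_fderiv_fst hu).deriv

theorem ux_eq_fderiv (hu : DifferentiableAt ℝ (uncurry u) (t, x)) :
    ux u t x = fderiv ℝ (uncurry u) (t, x) (0, 1) :=
  (hasDerivAt_fderiv_snd hu).deriv

theorem hasDerivAt_ut (hu : DifferentiableAt ℝ (uncurry u) (t, x)) :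
    HasDerivAt (fun s => u s x) (ut u t x) t :=
  ut_eq_fderiv hu ▸ hasDerivAt_fderiv_fst hu

theorem hasDerivAt_ux (hu : DifferentiableAt ℝ (uncurry u) (t, x)) :
    HasDerivAt (u t) (ux u t x) x :=
  ux_eq_fderiv hu ▸ hasDerivAt_fderiv_snd hu

theorem uncurry_ut_eq_fderiv (hu : Differentiable ℝ (uncurry u)) :
    uncurry (ut u) = fun p => fderiv ℝ (uncurry u) p (1, 0) :=
  funext fun p => ut_eq_fderiv (hu p)

theorem uncurry_ux_eq_fderiv (hu : Differentiable ℝ (uncurry u)) :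
    uncurry (ux u) = fun p => fderiv ℝ (uncurry u) p (0, 1) :=
  funext fun p => ux_eq_fderiv (hu p)

variable {m n : WithTop ℕ∞}

theorem contDiff_uncurry_ut (hu : ContDiff ℝ n (uncurry u)) (hmn : m + 1 ≤ n) :
    ContDiff ℝ m (uncurry (ut u)) := by
  rw [uncurry_ut_eq_fderiv (hu.differentiable (zero_lt_one.trans_le (le_add_self.trans hmn)).ne')]
  exact (hu.fderiv_right hmn).clm_apply contDiff_const

theorem contDiff_uncurry_ux (hu : ContDiff ℝ n (uncurry u)) (hmn : m + 1 ≤ n) :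
    ContDiff ℝ m (uncurry (ux u)) := by
  rw [uncurry_ux_eq_fderiv (hu.differentiable (zero_lt_one.trans_le (le_add_self.trans hmn)).ne')]
  exact (hu.fderiv_right hmn).clm_apply contDiff_const

theorem fderiv_fderiv_apply_comm {f : ℝ × ℝ → ℝ} (hf : ContDiff ℝ 2 f) (p v w : ℝ × ℝ) :
    fderiv ℝ (fun q => fderiv ℝ f q v) p w = fderiv ℝ (fun q => fderiv ℝ f q w) p v := by
  have hd : Differentiable ℝ (fderiv ℝ f) :=
    (hf.fderiv_right (m := 1) le_rfl).differentiable one_ne_zero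
  simp only [fderiv_clm_apply (hd p) (differentiableAt_const _), fderiv_fun_const, Pi.zero_apply,
    ContinuousLinearMap.comp_zero, zero_add, ContinuousLinearMap.flip_apply]
  exact (hf.contDiffAt.isSymmSndFDerivAt (by simp)).eq w v

theorem ut_ux_comm (hu : ContDiff ℝ 2 (uncurry u)) (t x : ℝ) :
    ut (ux u) t x = ux (ut u) t x := by
  have hdiff : Differentiable ℝ (uncurry u) := hu.differentiable two_ne_zero
  rw [ut_eq_fderiv ((contDiff_uncurry_ux hu le_rfl).differentiable one_ne_zero _),
    ux_eq_fderiv ((contDiff_uncurry_ut hu le_rfl).differentiable one_ne_zero _),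
    uncurry_ux_eq_fderiv hdiff, uncurry_ut_eq_fderiv hdiff]
  exact fderiv_fderiv_apply_comm hu _ _ _

end PartialDerivatives

section Support

variable {u : ℝ → ℝ → ℝ} {t : ℝ} {K : Set ℝ}

theorem eventually_ut_eq_zero (h : ∀ᶠ s in 𝓝 t, ∀ x ∉ K, u s x = 0) :
    ∀ᶠ s in 𝓝 t, ∀ x ∉ K, ut u s x = 0 :=
  h.eventually_nhds.mono fun s hs x hx => by
    have hloc : (fun s => u s x) =ᶠ[𝓝 s] fun _ => 0 := hs.mono fun _ h' => h' x hx
    rw [ut, hloc.deriv_eq, deriv_const]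

theorem eventually_ux_eq_zero (hK : IsClosed K) (h : ∀ᶠ s in 𝓝 t, ∀ x ∉ K, u s x = 0) :
    ∀ᶠ s in 𝓝 t, ∀ x ∉ K, ux u s x = 0 :=
  h.mono fun s hs x hx => by
    have hloc : u s =ᶠ[𝓝 x] fun _ => 0 := eventually_of_mem (hK.isOpen_compl.mem_nhds hx) hs
    rw [ux, hloc.deriv_eq, deriv_const]

end Support

theorem hasDerivAt_integral_of_eventually_eq_zero {F F' : ℝ → ℝ → ℝ} {K : Set ℝ} {t : ℝ}
    (hK : IsCompact K) (hF : Continuous (uncurry F)) (hF' : Continuous (uncurry F'))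
    (hFF' : ∀ s x, HasDerivAt (F · x) (F' s x) s) (hzero : ∀ᶠ s in 𝓝 t, ∀ x ∉ K, F s x = 0) :
    HasDerivAt (fun s => ∫ x, F s x) (∫ x, F' t x) t := by
  have hzero' : ∀ᶠ s in 𝓝 t, ∀ x ∉ K, F' s x = 0 :=
    hzero.eventually_nhds.mono fun s hs x hx =>
      (hFF' s x).unique ((hasDerivAt_const s 0).congr_of_eventuallyEq (hs.mono fun _ h => h x hx))
  obtain ⟨C, hC⟩ :=
    ((isCompact_closedBall t 1).prod hK).exists_bound_of_continuousOn hF'.continuousOn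
  refine (hasDerivAt_integral_of_dominated_loc_of_deriv_le (bound := K.indicator fun _ => C)
    (inter_mem hzero' (Metric.closedBall_mem_nhds t one_pos))
    (Eventually.of_forall fun s => (hF.uncurry_left s).aestronglyMeasurable)
    ((hF.uncurry_left t).integrable_of_hasCompactSupport (.intro hK hzero.self_of_nhds))
    (hF'.uncurry_left t).aestronglyMeasurable (Eventually.of_forall fun x s hs => ?_)
    ((integrableOn_const hK.measure_lt_top.ne).integrable_indicator hK.measurableSet)
    (Eventually.of_forall fun x s _ => hFF' s x)).2
  by_cases hx : x ∈ K
  · rw [indicator_of_mem hx]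
    exact hC (s, x) ⟨hs.2, hx⟩
  · rw [indicator_of_notMem hx, hs.1 x hx, norm_zero]

theorem integral_clamp_mul_deriv {a b : ℝ} (hab : a ≤ b) {h h' : ℝ → ℝ}
    (hd : ∀ x, HasDerivAt h (h' x) x) (hh' : Continuous h') (hh : HasCompactSupport h) :
    ∫ x, max a (min b x) * h' x = -∫ x in a..b, h x := by
  obtain ⟨lo, hi, hlo, hhi, hout⟩ :
      ∃ lo hi, lo ≤ a ∧ b ≤ hi ∧ ∀ x ∉ Ioo lo hi, x ∉ tsupport h := by
    have hsub := hh.isCompact.isBounded.subset_Icc_sInf_sSup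
    refine ⟨min a (sInf (tsupport h)) - 1, max b (sSup (tsupport h)) + 1,
      by linarith [min_le_left a (sInf (tsupport h))],
      by linarith [le_max_left b (sSup (tsupport h))], fun x hx hxs => hx ⟨?_, ?_⟩⟩
    · linarith [(hsub hxs).1, min_le_right a (sInf (tsupport h))]
    · linarith [(hsub hxs).2, le_max_right b (sSup (tsupport h))]
  have h0 : ∀ x ∉ Ioo lo hi, h x = 0 := fun x hx => image_eq_zero_of_notMem_tsupport (hout x hx)
  have h0' : ∀ x ∉ Ioo lo hi, h' x = 0 := fun x hx => by
    rw [← (hd x).deriv]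
    exact image_eq_zero_of_notMem_tsupport fun hx' => hout x hx (tsupport_deriv_subset hx')
  have hii : ∀ c d, IntervalIntegrable (fun x => max a (min b x) * h' x) volume c d :=
    fun c d => ((by fun_prop : Continuous fun x => max a (min b x)).mul hh').intervalIntegrable c d
  have hleft : ∫ x in lo..a, max a (min b x) * h' x = a * h a := by
    rw [intervalIntegral.integral_congr (g := fun x => a * h' x) fun x hx => ?_,
      intervalIntegral.integral_const_mul,
      intervalIntegral.integral_eq_sub_of_hasDerivAt (fun x _ => hd x) (hh'.intervalIntegrable _ _),
      h0 lo (by simp), sub_zero]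
    rw [uIcc_of_le hlo] at hx
    simp only [min_eq_right (hx.2.trans hab), max_eq_left hx.2]
  have hmid : ∫ x in a..b, max a (min b x) * h' x = b * h b - a * h a - ∫ x in a..b, h x := by
    rw [intervalIntegral.integral_congr (g := fun x => x * h' x) fun x hx => ?_,
      intervalIntegral.integral_mul_deriv_eq_deriv_mul (fun x _ => hasDerivAt_id' x)
        (fun x _ => hd x) intervalIntegrable_const (hh'.intervalIntegrable _ _)]
    · simp only [one_mul]
    rw [uIcc_of_le hab] at hx
    simp only [min_eq_right hx.2, max_eq_right hx.1]
  have hright : ∫ x in b..hi, max a (min b x) * h' x = -(b * h b) := by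
    rw [intervalIntegral.integral_congr (g := fun x => b * h' x) fun x hx => ?_,
      intervalIntegral.integral_const_mul,
      intervalIntegral.integral_eq_sub_of_hasDerivAt (fun x _ => hd x) (hh'.intervalIntegrable _ _),
      h0 hi (by simp), zero_sub, mul_neg]
    rw [uIcc_of_le hhi] at hx
    simp only [min_eq_left hx.1, max_eq_right hab]
  rw [← setIntegral_eq_integral_of_forall_compl_eq_zero (s := Ioc lo hi) fun x hx => by
      rw [h0' x fun hx' => hx (Ioo_subset_Ioc_self hx'), mul_zero],
    ← intervalIntegral.integral_of_le (hlo.trans (hab.trans hhi)),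
    ← intervalIntegral.integral_add_adjacent_intervals (hii lo a) (hii a hi),
    ← intervalIntegral.integral_add_adjacent_intervals (hii a b) (hii b hi), hleft, hmid, hright]
  ring

section Multiplier

variable {L ε₁ : ℝ}

theorem phi_eq_div_max (hL : 0 < L) (x : ℝ) : phi L ε₁ x = L * ε₁ / max L |x| := by
  unfold phi
  split_ifs with hx
  · rw [max_eq_left hx, mul_div_cancel_left₀ _ hL.ne']
  · rw [max_eq_right (not_le.mp hx).le]

theorem continuous_phi (hL : 0 < L) : Continuous (phi L ε₁) := by
  simp only [funext (phi_eq_div_max hL)]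
  exact continuous_const.div (continuous_const.max continuous_abs)
    fun x => (lt_max_of_lt_left hL).ne'

theorem phi_mul_self (hL : 0 < L) (x : ℝ) : phi L ε₁ x * x = ε₁ * max (-L) (min L x) := by
  unfold phi
  split_ifs with hx
  · rw [abs_le] at hx
    rw [min_eq_right hx.2, max_eq_right hx.1]
  · rcases lt_abs.mp (not_le.mp hx) with hx' | hx'
    · rw [abs_of_pos (hL.trans hx'), min_eq_left hx'.le, max_eq_right (by linarith)]
      field_simp [(hL.trans hx').ne']
    · rw [abs_of_neg (by linarith), min_eq_right (by linarith), max_eq_left (by linarith)]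
      field_simp [(show x < 0 by linarith).ne]

theorem phi_add_phi'_mul_self (hL : 0 < L) (x : ℝ) :
    phi L ε₁ x + phi' L ε₁ x * x = (Icc (-L) L).indicator (fun _ => ε₁) x := by
  unfold phi phi'
  split_ifs with hx
  · rw [indicator_of_mem (show x ∈ Icc (-L) L from abs_le.mp hx), zero_mul, add_zero]
  · rw [indicator_of_notMem (by rwa [mem_Icc, ← abs_le])]
    rcases lt_abs.mp (not_le.mp hx) with hx' | hx'
    · have hx0 : 0 < x := hL.trans hx'
      rw [abs_of_pos hx0, Real.sign_of_pos hx0]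
      field_simp
      ring
    · have hx0 : x < 0 := by linarith
      rw [abs_of_neg hx0, Real.sign_of_neg hx0]
      field_simp
      ring

theorem integral_phi_mul_self_mul_deriv (hL : 0 < L) {h h' : ℝ → ℝ}
    (hd : ∀ x, HasDerivAt h (h' x) x) (hh' : Continuous h') (hh : HasCompactSupport h) :
    ∫ x, phi L ε₁ x * x * h' x = -∫ x, (phi L ε₁ x + phi' L ε₁ x * x) * h x := by
  have hlhs : ∫ x, phi L ε₁ x * x * h' x = ε₁ * -∫ x in (-L)..L, h x := by
    simp_rw [phi_mul_self hL, mul_assoc]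
    rw [integral_const_mul, integral_clamp_mul_deriv (by linarith) hd hh' hh]
  have hrhs : ∫ x, (phi L ε₁ x + phi' L ε₁ x * x) * h x = ε₁ * ∫ x in (-L)..L, h x := by
    simp_rw [phi_add_phi'_mul_self hL, ← indicator_mul_left]
    rw [integral_indicator measurableSet_Icc, integral_Icc_eq_integral_Ioc,
      ← intervalIntegral.integral_of_le (by linarith), intervalIntegral.integral_const_mul]
  rw [hlhs, hrhs, mul_neg]

theorem integrable_phi_mul_self_mul (hL : 0 < L) {f : ℝ → ℝ} (hf : Continuous f)
    (hf' : HasCompactSupport f) : Integrable fun x => phi L ε₁ x * x * f x :=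
  (((continuous_phi hL).mul continuous_id).mul hf).integrable_of_hasCompactSupport hf'.mul_left

theorem integral_phi_mul_self_mul_mul_deriv (hL : 0 < L) {g g' : ℝ → ℝ}
    (hd : ∀ x, HasDerivAt g (g' x) x) (hg' : Continuous g') (hg : HasCompactSupport g) :
    ∫ x, phi L ε₁ x * x * (g x * g' x)
      = -(1 / 2) * ∫ x, (phi L ε₁ x + phi' L ε₁ x * x) * g x ^ 2 := by
  have hg_cont : Continuous g := continuous_iff_continuousAt.2 fun x => (hd x).continuousAt
  rw [integral_phi_mul_self_mul_deriv hL (h := fun x => g x ^ 2 / 2) (h' := fun x => g x * g' x)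
    (fun x => (((hd x).fun_pow 2).div_const 2).congr_deriv (by norm_num; ring))
    (hg_cont.mul hg') (hg.mono fun x hx h0 => hx (by simp [h0])),
    neg_mul, ← integral_const_mul]
  congr 2 with x
  ring

theorem integral_phi_mul_self_mul_potential (hL : 0 < L) {V g g' : ℝ → ℝ} (hV : ContDiff ℝ 1 V)
    (hd : ∀ x, HasDerivAt g (g' x) x) (hg' : Continuous g') (hg : HasCompactSupport g) :
    ∫ x, phi L ε₁ x * x * (V x * g x * g' x)
      = -(1 / 2) * (∫ x, (V x * phi L ε₁ x + V x * phi' L ε₁ x * x) * g x ^ 2)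
        - (1 / 2) * ∫ x, deriv V x * phi L ε₁ x * x * g x ^ 2 := by
  have hg_cont : Continuous g := continuous_iff_continuousAt.2 fun x => (hd x).continuousAt
  have hV' : Continuous (deriv V) := hV.continuous_deriv le_rfl
  have hibp := integral_phi_mul_self_mul_deriv hL (ε₁ := ε₁) (h := fun x => V x * g x ^ 2 / 2)
    (h' := fun x => deriv V x * g x ^ 2 / 2 + V x * g x * g' x)
    (fun x => (((hV.differentiable one_ne_zero x).hasDerivAt.mul ((hd x).fun_pow 2)).div_const
      2).congr_deriv (by norm_num; ring))
    (by fun_prop) (hg.mono fun x hx h0 => hx (by simp [h0]))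
  have hsplit : ∫ x, phi L ε₁ x * x * (deriv V x * g x ^ 2 / 2 + V x * g x * g' x)
      = (1 / 2) * (∫ x, deriv V x * phi L ε₁ x * x * g x ^ 2)
        + ∫ x, phi L ε₁ x * x * (V x * g x * g' x) := by
    simp_rw [mul_add]
    rw [integral_add
      (integrable_phi_mul_self_mul hL (f := fun x => deriv V x * g x ^ 2 / 2) (by fun_prop)
        (hg.mono fun x hx h0 => hx (by simp [h0])))
      (integrable_phi_mul_self_mul hL (f := fun x => V x * g x * g' x) (by fun_prop)
        (hg.mono fun x hx h0 => hx (by simp [h0]))), ← integral_const_mul]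
    congr 2 with x
    ring
  have hpot : ∫ x, (phi L ε₁ x + phi' L ε₁ x * x) * (V x * g x ^ 2 / 2)
      = (1 / 2) * ∫ x, (V x * phi L ε₁ x + V x * phi' L ε₁ x * x) * g x ^ 2 := by
    rw [← integral_const_mul]
    congr 1 with x
    ring
  linarith

end Multiplier

section Solution

variable {u : ℝ → ℝ → ℝ} {K : Set ℝ} {t L ε₁ : ℝ}

theorem hasDerivAt_integral_ut_mul_mul_ux {w : ℝ → ℝ} (hu : ContDiff ℝ 2 (uncurry u))
    (hw : Continuous w) (hK : IsCompact K) (hzero : ∀ᶠ s in 𝓝 t, ∀ x ∉ K, u s x = 0) :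
    HasDerivAt (fun s => ∫ x, ut u s x * w x * ux u s x)
      (∫ x, (utt u t x * w x * ux u t x + ut u t x * w x * ut (ux u) t x)) t := by
  have hut : ContDiff ℝ 1 (uncurry (ut u)) := contDiff_uncurry_ut hu (by norm_num)
  have hux : ContDiff ℝ 1 (uncurry (ux u)) := contDiff_uncurry_ux hu (by norm_num)
  refine hasDerivAt_integral_of_eventually_eq_zero (F := fun s x => ut u s x * w x * ux u s x)
    (F' := fun s x => utt u s x * w x * ux u s x + ut u s x * w x * ut (ux u) s x) hK
    ((hut.continuous.mul (hw.comp continuous_snd)).mul hux.continuous)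
    (((contDiff_uncurry_ut hut (m := 0) (by norm_num)).continuous.mul (hw.comp continuous_snd)).mul
      hux.continuous |>.add ((hut.continuous.mul (hw.comp continuous_snd)).mul
      (contDiff_uncurry_ut hux (m := 0) (by norm_num)).continuous))
    (fun s x => ((hasDerivAt_ut (hut.differentiable one_ne_zero _)).mul_const (w x)).mul
      (hasDerivAt_ut (hux.differentiable one_ne_zero _)))
    ((eventually_ut_eq_zero hzero).mono fun s hs x hx => by rw [hs x hx, zero_mul, zero_mul])

theorem momentum_density_time_deriv_eq {V a : ℝ → ℝ} {x : ℝ} (hu : ContDiff ℝ 2 (uncurry u))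
    (hpde : utt u t x - uxx u t x + V x * u t x + a x * ut u t x = 0) :
    utt u t x * (phi L ε₁ x * x) * ux u t x + ut u t x * (phi L ε₁ x * x) * ut (ux u) t x
      = phi L ε₁ x * x * (ux u t x * uxx u t x) + phi L ε₁ x * x * (ut u t x * ux (ut u) t x)
        - phi L ε₁ x * x * (V x * u t x * ux u t x)
        - a x * ut u t x * phi L ε₁ x * x * ux u t x := by
  rw [ut_ux_comm hu, show utt u t x = uxx u t x - V x * u t x - a x * ut u t x by linarith]
  ring

theorem integral_deriv_ut_mul_mul_ux_of_pde {V a : ℝ → ℝ} (hL : 0 < L)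
    (hu : ContDiff ℝ 2 (uncurry u)) (hK : IsCompact K)
    (hzero : ∀ᶠ s in 𝓝 t, ∀ x ∉ K, u s x = 0) (hV : ContDiff ℝ 1 V) (ha : Continuous a)
    (hpde : ∀ x, utt u t x - uxx u t x + V x * u t x + a x * ut u t x = 0) :
    ∫ x, (utt u t x * (phi L ε₁ x * x) * ux u t x
        + ut u t x * (phi L ε₁ x * x) * ut (ux u) t x)
      = -(1 / 2) * (∫ x, (phi L ε₁ x + phi' L ε₁ x * x) * ut u t x ^ 2)
        - (1 / 2) * (∫ x, (phi L ε₁ x + phi' L ε₁ x * x) * ux u t x ^ 2)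
        + (1 / 2) * (∫ x, (V x * phi L ε₁ x + V x * phi' L ε₁ x * x) * u t x ^ 2)
        + (1 / 2) * (∫ x, deriv V x * phi L ε₁ x * x * u t x ^ 2)
        - ∫ x, a x * ut u t x * phi L ε₁ x * x * ux u t x := by
  have hut : ContDiff ℝ 1 (uncurry (ut u)) := contDiff_uncurry_ut hu (by norm_num)
  have hux : ContDiff ℝ 1 (uncurry (ux u)) := contDiff_uncurry_ux hu (by norm_num)
  have hut_t : Continuous (ut u t) := hut.continuous.uncurry_left t
  have hux_t : Continuous (ux u t) := hux.continuous.uncurry_left t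
  have hutx_t : Continuous (ux (ut u) t) :=
    (contDiff_uncurry_ux hut (m := 0) (by norm_num)).continuous.uncurry_left t
  have huxx_t : Continuous (uxx u t) :=
    (contDiff_uncurry_ux hux (m := 0) (by norm_num)).continuous.uncurry_left t
  have hsupp_u : HasCompactSupport (u t) := .intro hK hzero.self_of_nhds
  have hsupp_ut : HasCompactSupport (ut u t) := .intro hK (eventually_ut_eq_zero hzero).self_of_nhds
  have hsupp_ux : HasCompactSupport (ux u t) :=
    .intro hK (eventually_ux_eq_zero hK.isClosed hzero).self_of_nhds
  have hphi : Continuous (phi L ε₁) := continuous_phi hL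
  have i1 := integrable_phi_mul_self_mul hL (ε₁ := ε₁)
    (f := fun x => ux u t x * uxx u t x) (hux_t.mul huxx_t) hsupp_ux.mul_right
  have i2 := integrable_phi_mul_self_mul hL (ε₁ := ε₁)
    (f := fun x => ut u t x * ux (ut u) t x) (hut_t.mul hutx_t) hsupp_ut.mul_right
  have i3 := integrable_phi_mul_self_mul hL (ε₁ := ε₁) (f := fun x => V x * u t x * ux u t x)
    (by fun_prop) hsupp_ux.mul_left
  have i4 : Integrable fun x => a x * ut u t x * phi L ε₁ x * x * ux u t x :=
    (by fun_prop : Continuous _).integrable_of_hasCompactSupport hsupp_ux.mul_left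
  rw [integral_congr_ae (Eventually.of_forall fun x =>
      momentum_density_time_deriv_eq hu (hpde x)), integral_sub ((i1.fun_add i2).sub' i3) i4,
    integral_sub (i1.fun_add i2) i3, integral_add i1 i2,
    integral_phi_mul_self_mul_mul_deriv hL (g' := uxx u t)
      (fun x => hasDerivAt_ux (hux.differentiable one_ne_zero _)) huxx_t hsupp_ux,
    integral_phi_mul_self_mul_mul_deriv hL
      (fun x => hasDerivAt_ux (hut.differentiable one_ne_zero _)) hutx_t hsupp_ut,
    integral_phi_mul_self_mul_potential hL hV
      (fun x => hasDerivAt_ux (hu.differentiable two_ne_zero _)) hux_t hsupp_u]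
  ring

end Solution

theorem multiplier_identity_general
    (a V : ℝ → ℝ) (u : ℝ → ℝ → ℝ) (u₀ u₁ : ℝ → ℝ) (L ε₁ : ℝ)
    (hL : 0 < L)
    (ha_cont : Continuous a)
    (hV : ContDiff ℝ 1 V)
    (hsol : IsSmoothSolution V a u u₀ u₁) :
    ∀ t > (0:ℝ),
      deriv (fun τ => ∫ x, ut u τ x * phi L ε₁ x * x * ux u τ x) t
        + (1/2) * (∫ x, (phi L ε₁ x + phi' L ε₁ x * x) * (ut u t x) ^ 2)
        + (1/2) * (∫ x, (phi L ε₁ x + phi' L ε₁ x * x) * (ux u t x) ^ 2)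
        - (1/2) * (∫ x, (V x * phi L ε₁ x + V x * phi' L ε₁ x * x) * (u t x) ^ 2)
        - (1/2) * (∫ x, deriv V x * phi L ε₁ x * x * (u t x) ^ 2)
        + (∫ x, a x * ut u t x * phi L ε₁ x * x * ux u t x) = 0 := by
  intro t ht
  obtain ⟨hu, hpde, -, -, -, -, -, -, hsupp⟩ := hsol
  have hu2 : ContDiff ℝ 2 (uncurry u) := hu.of_le (WithTop.coe_le_coe.2 le_top)
  obtain ⟨R, -, hR⟩ := hsupp (t + 1) (by linarith)
  have hzero : ∀ᶠ s in 𝓝 t, ∀ x ∉ Icc (-R) R, u s x = 0 := by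
    filter_upwards [Icc_mem_nhds ht (lt_add_one t)] with s hs x hx
    exact hR s hs x (by rw [mem_Icc, ← abs_le, not_le] at hx; exact hx.le)
  have hmomentum := hasDerivAt_integral_ut_mul_mul_ux (w := fun x => phi L ε₁ x * x) hu2
    ((continuous_phi hL).mul continuous_id) isCompact_Icc hzero
  rw [show (fun τ => ∫ x, ut u τ x * phi L ε₁ x * x * ux u τ x)
      = fun τ => ∫ x, ut u τ x * (phi L ε₁ x * x) * ux u τ x by simp only [mul_assoc],
    hmomentum.deriv, integral_deriv_ut_mul_mul_ux_of_pde hL hu2 isCompact_Icc hzero hV ha_cont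
      (hpde t ht)]
  ring

/-- **Multiplier identity (2.4).** For `φ(x) = ε₁` on `|x| ≤ L`, `φ(x) = Lε₁/|x|` on
`|x| ≥ L`, and a smooth classical solution `u` of `u_tt − u_xx + V u + a u_t = 0` with
smooth compactly supported data, vanishing for large `|x|` on each `[0,T]`,
for every `t > 0`:
`(d/dt) ∫ u_t φ x u_x dx + (1/2)∫ (φ + φ'x) u_t² dx + (1/2)∫ (φ + φ'x) u_x² dx
 − (1/2)∫ (Vφ + Vφ'x) u² dx − (1/2)∫ V'φx u² dx + ∫ a u_t φ x u_x dx = 0`. -/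
theorem multiplier_identity
    (a V : ℝ → ℝ) (u : ℝ → ℝ → ℝ) (u₀ u₁ : ℝ → ℝ) (L ε₁ : ℝ)
    (hL : 0 < L) (hε₁ : 0 < ε₁)
    (ha_cont : Continuous a) (ha_bdd : ∃ M, ∀ x, |a x| ≤ M) (ha_nonneg : ∀ x, 0 ≤ a x)
    (hV : ContDiff ℝ 1 V) (hV_bdd : ∃ M, ∀ x, |V x| ≤ M)
    (hV'_bdd : ∃ M, ∀ x, |deriv V x| ≤ M) (hV_pos : ∀ x, 0 < V x)
    (hsol : IsSmoothSolution V a u u₀ u₁) :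
    ∀ t > (0:ℝ),
      deriv (fun τ => ∫ x, ut u τ x * phi L ε₁ x * x * ux u τ x) t
        + (1/2) * (∫ x, (phi L ε₁ x + phi' L ε₁ x * x) * (ut u t x) ^ 2)
        + (1/2) * (∫ x, (phi L ε₁ x + phi' L ε₁ x * x) * (ux u t x) ^ 2)
        - (1/2) * (∫ x, (V x * phi L ε₁ x + V x * phi' L ε₁ x * x) * (u t x) ^ 2)
        - (1/2) * (∫ x, deriv V x * phi L ε₁ x * x * (u t x) ^ 2)
        + (∫ x, a x * ut u t x * phi L ε₁ x * x * ux u t x) = 0 :=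
  multiplier_identity_general a V u u₀ u₁ L ε₁ hL ha_cont hV hsol
end

section
/- Let L > 0, ε₁ > 0, φ(x) = ε₁ for |x| ≤ L and φ(x) = Lε₁/|x| for |x| ≥ L, and let C* > 0 be a constant for which the Poincaré-type inequality ∫_{|x|≤L} w² dx ≤ C*(∫_ℝ (w')² dx + ∫_{|x|≥L} w² dx) holds for all w ∈ H¹(ℝ). Assume V is C¹ with V > 0, V'(x)x ≤ 0, and a is continuous, bounded, nonnegative with a(x) ≥ ε₁ for |x| ≥ L. Then for every w ∈ H¹(ℝ) (in particular for w = u(t,·)): ∫_ℝ (V'(x)x + V(x)) φ(x) w(x)² dx ≤ ε₁ V(0) C* ∫_ℝ w'(x)² dx + (V(0)C* + V_L') ∫_ℝ a(x) w(x)² dx, where V_L' := max{V(L), V(−L)}. -/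
open MeasureTheory

open Set

/-- When `f` is not integrable, `∫ f` is the junk value `0 ≤ ∫ g`. -/
lemma integral_mono_of_integrable_of_nonneg {α : Type*} [MeasurableSpace α] {μ : Measure α}
    {f g : α → ℝ} (hg : Integrable g μ) (hg₀ : 0 ≤ᵐ[μ] g) (hfg : f ≤ᵐ[μ] g) :
    ∫ x, f x ∂μ ≤ ∫ x, g x ∂μ := by
  by_cases hf : Integrable f μ
  · exact integral_mono_ae hf hg hfg
  · rw [integral_undef hf]
    exact integral_nonneg_of_ae hg₀

lemma mul_setIntegral_le_integral_mul {α : Type*} [MeasurableSpace α] {μ : Measure α}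
    {a g : α → ℝ} {s : Set α} {c : ℝ} (hs : MeasurableSet s) (hg : Integrable g μ)
    (hag : Integrable (fun x => a x * g x) μ) (hg₀ : ∀ x, 0 ≤ g x) (ha₀ : ∀ x, 0 ≤ a x)
    (hca : ∀ x ∈ s, c ≤ a x) :
    c * ∫ x in s, g x ∂μ ≤ ∫ x, a x * g x ∂μ :=
  calc c * ∫ x in s, g x ∂μ = ∫ x in s, c * g x ∂μ := (integral_const_mul c _).symm
    _ ≤ ∫ x in s, a x * g x ∂μ :=
      setIntegral_mono_on (hg.const_mul c).integrableOn hag.integrableOn hs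
        fun x hx => mul_le_mul_of_nonneg_right (hca x hx) (hg₀ x)
    _ ≤ ∫ x, a x * g x ∂μ :=
      setIntegral_le_integral hag (Filter.Eventually.of_forall fun x => mul_nonneg (ha₀ x) (hg₀ x))

section RadiallyNonincreasing

variable {V : ℝ → ℝ} (hV : Differentiable ℝ V) (hV' : ∀ x, deriv V x * x ≤ 0)
include hV hV'

lemma antitoneOn_Ici_zero_of_deriv_mul_self_nonpos : AntitoneOn V (Ici 0) := by
  refine antitoneOn_of_deriv_nonpos (convex_Ici 0) hV.continuous.continuousOn hV.differentiableOn
    fun x hx => ?_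
  rw [interior_Ici] at hx
  exact nonpos_of_mul_nonpos_left (hV' x) hx

lemma monotoneOn_Iic_zero_of_deriv_mul_self_nonpos : MonotoneOn V (Iic 0) := by
  refine monotoneOn_of_deriv_nonneg (convex_Iic 0) hV.continuous.continuousOn hV.differentiableOn
    fun x hx => ?_
  rw [interior_Iic] at hx
  exact nonneg_of_mul_nonpos_left (hV' x) hx

lemma le_apply_zero_of_deriv_mul_self_nonpos (x : ℝ) : V x ≤ V 0 := by
  rcases le_total x 0 with hx | hx
  · exact monotoneOn_Iic_zero_of_deriv_mul_self_nonpos hV hV' hx self_mem_Iic hx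
  · exact antitoneOn_Ici_zero_of_deriv_mul_self_nonpos hV hV' self_mem_Ici hx hx

lemma le_max_of_le_abs_of_deriv_mul_self_nonpos {L x : ℝ} (hL : 0 ≤ L) (hx : L ≤ |x|) :
    V x ≤ max (V L) (V (-L)) := by
  rcases le_total 0 x with h | h
  · rw [abs_of_nonneg h] at hx
    exact (antitoneOn_Ici_zero_of_deriv_mul_self_nonpos hV hV' hL (hL.trans hx) hx).trans
      (le_max_left _ _)
  · rw [abs_of_nonpos h] at hx
    exact (monotoneOn_Iic_zero_of_deriv_mul_self_nonpos hV hV' h (neg_nonpos.2 hL)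
      (by linarith)).trans (le_max_right _ _)

end RadiallyNonincreasing

section Phi

variable {L ε₁ : ℝ} (hL : 0 ≤ L) (hε₁ : 0 ≤ ε₁)
include hL hε₁

lemma phi_nonneg (x : ℝ) : 0 ≤ phi L ε₁ x := by
  unfold phi
  split_ifs
  · exact hε₁
  · positivity

lemma phi_le (x : ℝ) : phi L ε₁ x ≤ ε₁ := by
  unfold phi
  split_ifs with h
  · exact le_rfl
  · have h : L < |x| := not_le.1 h
    rw [div_le_iff₀ (hL.trans_lt h)]
    exact (mul_le_mul_of_nonneg_right h.le hε₁).trans_eq (mul_comm _ _)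

end Phi

section PotentialWeight

variable {a V : ℝ → ℝ} {L ε₁ : ℝ} (hV : Differentiable ℝ V) (hV' : ∀ x, deriv V x * x ≤ 0)
include hV hV'

lemma potential_weight_le_of_abs_le (hε₁ : 0 ≤ ε₁) {x : ℝ} (hx : |x| ≤ L) :
    (deriv V x * x + V x) * phi L ε₁ x ≤ ε₁ * V 0 := by
  rw [phi, if_pos hx]
  nlinarith [hV' x, le_apply_zero_of_deriv_mul_self_nonpos hV hV' x]

lemma potential_weight_le_of_le_abs (hL : 0 ≤ L) (hε₁ : 0 ≤ ε₁) {x : ℝ} (hx : L ≤ |x|)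
    (hVx : 0 ≤ V x) (hax : ε₁ ≤ a x) :
    (deriv V x * x + V x) * phi L ε₁ x ≤ max (V L) (V (-L)) * a x :=
  calc (deriv V x * x + V x) * phi L ε₁ x ≤ V x * phi L ε₁ x := by
        nlinarith [hV' x, phi_nonneg hL hε₁ x]
    _ ≤ V x * a x := mul_le_mul_of_nonneg_left ((phi_le hL hε₁ x).trans hax) hVx
    _ ≤ max (V L) (V (-L)) * a x := mul_le_mul_of_nonneg_right
        (le_max_of_le_abs_of_deriv_mul_self_nonpos hV hV' hL hx) (hε₁.trans hax)

lemma potential_integrand_le (hL : 0 ≤ L) (hε₁ : 0 ≤ ε₁) (ha₀ : ∀ x, 0 ≤ a x)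
    (ha : ∀ x, L ≤ |x| → ε₁ ≤ a x) (hV₀ : ∀ x, 0 ≤ V x) (w : ℝ → ℝ) (x : ℝ) :
    (deriv V x * x + V x) * phi L ε₁ x * w x ^ 2 ≤
      ε₁ * V 0 * {x : ℝ | |x| ≤ L}.indicator (fun y => w y ^ 2) x
        + max (V L) (V (-L)) * (a x * w x ^ 2) := by
  have hw : 0 ≤ w x ^ 2 := sq_nonneg _
  by_cases hx : |x| ≤ L
  · rw [indicator_of_mem (show x ∈ {x : ℝ | |x| ≤ L} from hx)]
    have hVL : 0 ≤ max (V L) (V (-L)) := (hV₀ L).trans (le_max_left _ _)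
    nlinarith [potential_weight_le_of_abs_le hV hV' hε₁ hx, mul_nonneg hVL (mul_nonneg (ha₀ x) hw)]
  · rw [indicator_of_notMem (show x ∉ {x : ℝ | |x| ≤ L} from hx)]
    have hx : L ≤ |x| := (not_le.1 hx).le
    nlinarith [potential_weight_le_of_le_abs hV hV' hL hε₁ hx (hV₀ x) (ha x hx)]

lemma integral_potential_le (hL : 0 ≤ L) (hε₁ : 0 ≤ ε₁) (ha₀ : ∀ x, 0 ≤ a x)
    (ha : ∀ x, L ≤ |x| → ε₁ ≤ a x) (hV₀ : ∀ x, 0 ≤ V x) {w : ℝ → ℝ}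
    (hw : Integrable (fun x => w x ^ 2)) (haw : Integrable (fun x => a x * w x ^ 2)) :
    ∫ x, (deriv V x * x + V x) * phi L ε₁ x * w x ^ 2 ≤
      ε₁ * V 0 * (∫ x in {x : ℝ | |x| ≤ L}, w x ^ 2) + max (V L) (V (-L)) * ∫ x, a x * w x ^ 2 := by
  have hS : MeasurableSet {x : ℝ | |x| ≤ L} :=
    measurableSet_le continuous_abs.measurable measurable_const
  have hwS := (hw.indicator hS).const_mul (ε₁ * V 0)
  have hVL : 0 ≤ max (V L) (V (-L)) := (hV₀ L).trans (le_max_left _ _)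
  calc ∫ x, (deriv V x * x + V x) * phi L ε₁ x * w x ^ 2
      ≤ ∫ x, (ε₁ * V 0 * {x : ℝ | |x| ≤ L}.indicator (fun y => w y ^ 2) x
          + max (V L) (V (-L)) * (a x * w x ^ 2)) :=
        integral_mono_of_integrable_of_nonneg (hwS.add (haw.const_mul _))
          (Filter.Eventually.of_forall fun x => add_nonneg
            (mul_nonneg (mul_nonneg hε₁ (hV₀ 0)) (indicator_nonneg (fun y _ => sq_nonneg (w y)) x))
            (mul_nonneg hVL (mul_nonneg (ha₀ x) (sq_nonneg (w x)))))
          (Filter.Eventually.of_forall (potential_integrand_le hV hV' hL hε₁ ha₀ ha hV₀ w))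
    _ = ε₁ * V 0 * (∫ x in {x : ℝ | |x| ≤ L}, w x ^ 2)
          + max (V L) (V (-L)) * ∫ x, a x * w x ^ 2 := by
        rw [integral_add hwS (haw.const_mul _), integral_const_mul, integral_const_mul,
          integral_indicator hS]

end PotentialWeight

theorem potential_term_estimate_general
    (a V : ℝ → ℝ) (L ε₁ Cstar : ℝ)
    (hL : 0 < L) (hε₁ : 0 < ε₁) (hCstar : 0 < Cstar)
    (ha_cont : Continuous a) (ha_bdd : ∃ M, ∀ x, |a x| ≤ M) (ha_nonneg : ∀ x, 0 ≤ a x)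
    (ha_eff : ∀ x : ℝ, L ≤ |x| → ε₁ ≤ a x)
    (hV : ContDiff ℝ 1 V) (hV_pos : ∀ x, 0 < V x)
    (hV2 : ∀ x, deriv V x * x ≤ 0)
    (hP : ∀ w : ℝ → ℝ, ContDiff ℝ 1 w →
      Integrable (fun x => w x ^ 2) → Integrable (fun x => deriv w x ^ 2) →
      ∫ x in {x : ℝ | |x| ≤ L}, w x ^ 2 ≤
        Cstar * ((∫ x, deriv w x ^ 2) + ∫ x in {x : ℝ | L ≤ |x|}, w x ^ 2))
    (w : ℝ → ℝ) (hw : ContDiff ℝ 1 w)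
    (hw2 : Integrable (fun x => w x ^ 2))
    (hw'2 : Integrable (fun x => deriv w x ^ 2)) :
    ∫ x, (deriv V x * x + V x) * phi L ε₁ x * w x ^ 2 ≤
      ε₁ * V 0 * Cstar * (∫ x, deriv w x ^ 2)
        + (V 0 * Cstar + max (V L) (V (-L))) * ∫ x, a x * w x ^ 2 := by
  obtain ⟨Ma, hMa⟩ := ha_bdd
  have haw : Integrable (fun x => a x * w x ^ 2) := hw2.bdd_mul ha_cont.aestronglyMeasurable
    (Filter.Eventually.of_forall fun x => (Real.norm_eq_abs _).trans_le (hMa x))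
  have hT : MeasurableSet {x : ℝ | L ≤ |x|} :=
    measurableSet_le measurable_const continuous_abs.measurable
  have haT := mul_setIntegral_le_integral_mul (μ := volume) hT hw2 haw (fun x => sq_nonneg (w x))
    ha_nonneg ha_eff
  have hV0 : 0 ≤ V 0 := (hV_pos 0).le
  calc ∫ x, (deriv V x * x + V x) * phi L ε₁ x * w x ^ 2
      ≤ ε₁ * V 0 * (∫ x in {x : ℝ | |x| ≤ L}, w x ^ 2)
          + max (V L) (V (-L)) * ∫ x, a x * w x ^ 2 :=
        integral_potential_le (hV.differentiable one_ne_zero) hV2 hL.le hε₁.le ha_nonneg ha_eff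
          (fun x => (hV_pos x).le) hw2 haw
    _ ≤ ε₁ * V 0 * (Cstar * ((∫ x, deriv w x ^ 2) + ∫ x in {x : ℝ | L ≤ |x|}, w x ^ 2))
          + max (V L) (V (-L)) * ∫ x, a x * w x ^ 2 := by
        gcongr
        exact hP w hw hw2 hw'2
    _ ≤ _ := by linarith [mul_le_mul_of_nonneg_left haT (mul_nonneg hV0 hCstar.le)]

/-- **Estimate (2.5)–(2.7).** Under (A.1), (A.2), (V.1), (V.2) and a Poincaré-type
constant `C*`, for every `w ∈ H¹(ℝ)`:
`∫ (V'x + V) φ w² dx ≤ ε₁ V(0) C* ∫ (w')² dx + (V(0)C* + V_L') ∫ a w² dx`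
with `V_L' := max {V(L), V(−L)}`. -/
theorem potential_term_estimate
    (a V : ℝ → ℝ) (L ε₁ Cstar : ℝ)
    (hL : 0 < L) (hε₁ : 0 < ε₁) (hCstar : 0 < Cstar)
    (ha_cont : Continuous a) (ha_bdd : ∃ M, ∀ x, |a x| ≤ M) (ha_nonneg : ∀ x, 0 ≤ a x)
    (ha_eff : ∀ x : ℝ, L ≤ |x| → ε₁ ≤ a x)
    (hV : ContDiff ℝ 1 V) (hV_bdd : ∃ M, ∀ x, |V x| ≤ M)
    (hV'_bdd : ∃ M, ∀ x, |deriv V x| ≤ M) (hV_pos : ∀ x, 0 < V x)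
    (hV2 : ∀ x, deriv V x * x ≤ 0)
    (hP : ∀ w : ℝ → ℝ, ContDiff ℝ 1 w →
      Integrable (fun x => w x ^ 2) → Integrable (fun x => deriv w x ^ 2) →
      ∫ x in {x : ℝ | |x| ≤ L}, w x ^ 2 ≤
        Cstar * ((∫ x, deriv w x ^ 2) + ∫ x in {x : ℝ | L ≤ |x|}, w x ^ 2))
    (w : ℝ → ℝ) (hw : ContDiff ℝ 1 w)
    (hw2 : Integrable (fun x => w x ^ 2))
    (hw'2 : Integrable (fun x => deriv w x ^ 2)) :
    ∫ x, (deriv V x * x + V x) * phi L ε₁ x * w x ^ 2 ≤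
      ε₁ * V 0 * Cstar * (∫ x, deriv w x ^ 2)
        + (V 0 * Cstar + max (V L) (V (-L))) * ∫ x, a x * w x ^ 2 :=
  potential_term_estimate_general a V L ε₁ Cstar hL hε₁ hCstar ha_cont ha_bdd ha_nonneg ha_eff hV
    hV_pos hV2 hP w hw hw2 hw'2
end

section
/- (Lemma 2.4: positivity of the auxiliary functional.) Assume (A.1), (A.2), (V.1), (V.2), set α = ε₁/4 and V_L := min{V(L),V(−L)}. There exists k₀ ≥ 2 (any k with k > α/ε + αε/V_L + Lε₁ for some fixed 0 < ε < ε₁ will do) such that for all k ≥ k₀ and every smooth classical solution u of u_tt − u_xx + V(x)u + a(x)u_t = 0 with smooth compactly supported initial data, the functional G_k(t) = ∫_ℝ u_t(t,x) φ(x) x u_x(t,x) dx + α ∫_ℝ u_t(t,x) u(t,x) dx + (α/2) ∫_ℝ a(x) u(t,x)² dx + k E_u(t) satisfies G_k(t) ≥ 0 for all t ≥ 0. -/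
/-!
`G_k(t)` is the integral of a quadratic form in `(u_t, u_x, u)` with `x`-dependent coefficients,
so it suffices that this form is pointwise nonnegative. Since `|φ(x) x| ≤ L ε₁`, the cross term
`u_t φ x u_x` costs at most `L ε₁ (u_t² + u_x²) / 2`, and Young's inequality bounds
`α u_t u` below by `-(u_t² + ε₁² u²) / 8`. Thus `k ≥ L ε₁ + 1/4` controls `u_t²` and `u_x²`,
and the coefficient `(α a + k V) / 2` of `u²` must beat `ε₁² / 8`: for `|x| ≥ L` the damping
`a ≥ ε₁` does this, and for `|x| ≤ L` (V.2) gives `V ≥ V_L`, so `k ≥ ε₁² / (4 V_L)` suffices.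
-/

open MeasureTheory

/-- The auxiliary functional `G_k(t)` (with `α = ε₁/4`). -/
noncomputable def Gk (V a : ℝ → ℝ) (L ε₁ k : ℝ) (u : ℝ → ℝ → ℝ) (t : ℝ) : ℝ :=
  (∫ x, ut u t x * phi L ε₁ x * x * ux u t x)
    + (ε₁ / 4) * (∫ x, ut u t x * u t x)
    + (ε₁ / 4 / 2) * (∫ x, a x * (u t x) ^ 2)
    + k * Eu V u t

open Set Filter Topology

lemma abs_phi_mul_self_le {L ε₁ : ℝ} (hL : 0 ≤ L) (hε₁ : 0 ≤ ε₁) (x : ℝ) :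
    |phi L ε₁ x * x| ≤ L * ε₁ := by
  unfold phi
  split_ifs with hx
  · rw [abs_mul, abs_of_nonneg hε₁, mul_comm]
    exact mul_le_mul_of_nonneg_right hx hε₁
  · have hx0 : |x| ≠ 0 := (hL.trans_lt (not_le.mp hx)).ne'
    rw [abs_mul, abs_div, abs_abs, abs_of_nonneg (mul_nonneg hL hε₁), div_mul_cancel₀ _ hx0]

lemma measurable_phi (L ε₁ : ℝ) : Measurable (phi L ε₁) :=
  Measurable.ite (measurableSet_le continuous_abs.measurable measurable_const)
    measurable_const (measurable_const.div continuous_abs.measurable)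

lemma min_le_of_deriv_mul_self_nonpos {V : ℝ → ℝ} (hV : Differentiable ℝ V)
    (hV' : ∀ x, deriv V x * x ≤ 0) {L x : ℝ} (hx : |x| ≤ L) :
    min (V L) (V (-L)) ≤ V x := by
  rcases le_total 0 x with h | h
  · have hanti : AntitoneOn V (Ici 0) :=
      antitoneOn_of_deriv_nonpos (convex_Ici 0) hV.continuous.continuousOn
        hV.differentiableOn fun y hy => by
          rw [interior_Ici] at hy; nlinarith [hV' y, mem_Ioi.mp hy]
    have hxL : x ≤ L := (le_abs_self x).trans hx
    exact (min_le_left _ _).trans (hanti h (h.trans hxL) hxL)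
  · have hmono : MonotoneOn V (Iic 0) :=
      monotoneOn_of_deriv_nonneg (convex_Iic 0) hV.continuous.continuousOn
        hV.differentiableOn fun y hy => by
          rw [interior_Iic] at hy; nlinarith [hV' y, mem_Iio.mp hy]
    have hLx : -L ≤ x := neg_le.mp ((neg_le_abs x).trans hx)
    exact (min_le_right _ _).trans (hmono (hLx.trans h) h hLx)

lemma integrand_Gk_nonneg {ε k c B a v p q w : ℝ} (hc : |c| ≤ B) (hk : B + 1 / 4 ≤ k)
    (hav : ε ^ 2 / 4 ≤ ε / 4 * a + k * v) :
    0 ≤ p * c * q + ε / 4 * (p * w) + ε / 4 / 2 * (a * w ^ 2)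
      + k * (1 / 2 * (p ^ 2 + q ^ 2 + v * w ^ 2)) := by
  obtain ⟨hc₁, hc₂⟩ := abs_le.mp hc
  nlinarith [mul_nonneg (by linarith : (0:ℝ) ≤ B - c) (sq_nonneg (p - q)),
    mul_nonneg (by linarith : (0:ℝ) ≤ B + c) (sq_nonneg (p + q)),
    sq_nonneg (p + ε * w),
    mul_nonneg (by linarith : (0:ℝ) ≤ k - B - 1 / 4) (sq_nonneg p),
    mul_nonneg (by linarith : (0:ℝ) ≤ k - B - 1 / 4) (sq_nonneg q),
    mul_nonneg (by linarith : (0:ℝ) ≤ ε / 4 * a + k * v - ε ^ 2 / 4) (sq_nonneg w)]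

lemma hasCompactSupport_of_forall_le_abs {f : ℝ → ℝ} {R : ℝ} (hf : ∀ x, R ≤ |x| → f x = 0) :
    HasCompactSupport f :=
  HasCompactSupport.intro (isCompact_closedBall 0 R) fun x hx =>
    hf x (le_of_lt (by simpa [Real.norm_eq_abs] using hx))

lemma deriv_eq_zero_of_eventuallyEq_nhdsGE {f : ℝ → ℝ} {t : ℝ} (hf : DifferentiableAt ℝ f t)
    (h : f =ᶠ[𝓝[≥] t] 0) : deriv f t = 0 :=
  (uniqueDiffWithinAt_Ici t).eq_deriv _ hf.hasDerivAt.hasDerivWithinAt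
    ((hasDerivWithinAt_const t _ 0).congr_of_eventuallyEq h (h.eq_of_nhdsWithin self_mem_Ici))

section Slices

variable {u : ℝ → ℝ → ℝ} (hu : ContDiff ℝ 1 fun p : ℝ × ℝ => u p.1 p.2)
include hu

lemma hasDerivAt_time_slice (t x : ℝ) :
    HasDerivAt (fun s => u s x) (fderiv ℝ (fun p : ℝ × ℝ => u p.1 p.2) (t, x) (1, 0)) t := by
  have h := (hu.differentiable one_ne_zero (t, x)).hasFDerivAt.comp_hasDerivAt t
    ((hasDerivAt_id t).prodMk (hasDerivAt_const t x))
  exact h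

lemma hasDerivAt_space_slice (t x : ℝ) :
    HasDerivAt (fun y => u t y) (fderiv ℝ (fun p : ℝ × ℝ => u p.1 p.2) (t, x) (0, 1)) x :=
  (hu.differentiable one_ne_zero (t, x)).hasFDerivAt.comp_hasDerivAt x
    ((hasDerivAt_const x t).prodMk (hasDerivAt_id x))

lemma continuous_ut (t : ℝ) : Continuous (ut u t) := by
  have h : ut u t = fun x => fderiv ℝ (fun p : ℝ × ℝ => u p.1 p.2) (t, x) (1, 0) :=
    funext fun x => (hasDerivAt_time_slice hu t x).deriv
  rw [h]
  exact ((hu.continuous_fderiv one_ne_zero).comp (Continuous.prodMk_right t)).clm_apply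
    continuous_const

lemma continuous_ux (t : ℝ) : Continuous (ux u t) := by
  have h : ux u t = fun x => fderiv ℝ (fun p : ℝ × ℝ => u p.1 p.2) (t, x) (0, 1) :=
    funext fun x => (hasDerivAt_space_slice hu t x).deriv
  rw [h]
  exact ((hu.continuous_fderiv one_ne_zero).comp (Continuous.prodMk_right t)).clm_apply
    continuous_const

end Slices

lemma Gk_eq_integral {V a : ℝ → ℝ} {L ε₁ k : ℝ} {u : ℝ → ℝ → ℝ} {t : ℝ}
    (hL : 0 ≤ L) (hε₁ : 0 ≤ ε₁) (ha : Continuous a) (hV : Continuous V)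
    (hw : Continuous (u t)) (hw' : HasCompactSupport (u t))
    (hf : Continuous (ut u t)) (hf' : HasCompactSupport (ut u t))
    (hg : Continuous (ux u t)) (hg' : HasCompactSupport (ux u t)) :
    Gk V a L ε₁ k u t = ∫ x, (ut u t x * phi L ε₁ x * x * ux u t x
      + ε₁ / 4 * (ut u t x * u t x) + ε₁ / 4 / 2 * (a x * u t x ^ 2)
      + k * (1 / 2 * (ut u t x ^ 2 + ux u t x ^ 2 + V x * u t x ^ 2))) := by
  have sq {h : ℝ → ℝ} (hh : HasCompactSupport h) : HasCompactSupport fun x => h x ^ 2 :=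
    hh.comp_left (zero_pow two_ne_zero)
  have i_fg : Integrable fun x => ut u t x * ux u t x :=
    (hf.mul hg).integrable_of_hasCompactSupport hf'.mul_right
  have i_phi : Integrable fun x => ut u t x * phi L ε₁ x * x * ux u t x := by
    refine (i_fg.bdd_mul ((measurable_phi L ε₁).mul measurable_id).aestronglyMeasurable
      (ae_of_all _ fun x => abs_phi_mul_self_le hL hε₁ x)).congr (ae_of_all _ fun x => ?_)
    simp only [Pi.mul_apply, id]
    ring
  have i_fw : Integrable fun x => ut u t x * u t x :=
    (hf.mul hw).integrable_of_hasCompactSupport hf'.mul_right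
  have i_aw : Integrable fun x => a x * u t x ^ 2 :=
    (ha.mul (hw.pow 2)).integrable_of_hasCompactSupport (sq hw').mul_left
  have i_f2 : Integrable fun x => ut u t x ^ 2 :=
    (hf.pow 2).integrable_of_hasCompactSupport (sq hf')
  have i_g2 : Integrable fun x => ux u t x ^ 2 :=
    (hg.pow 2).integrable_of_hasCompactSupport (sq hg')
  have i_Vw : Integrable fun x => V x * u t x ^ 2 :=
    (hV.mul (hw.pow 2)).integrable_of_hasCompactSupport (sq hw').mul_left
  rw [integral_add, integral_add, integral_add, integral_const_mul, integral_const_mul,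
    integral_const_mul, integral_const_mul, integral_add, integral_add]
  · rfl
  all_goals fun_prop

lemma IsSmoothSolution.hasCompactSupport_slices {V a u₀ u₁ : ℝ → ℝ} {u : ℝ → ℝ → ℝ}
    (h : IsSmoothSolution V a u u₀ u₁) {t : ℝ} (ht : 0 ≤ t) :
    HasCompactSupport (u t) ∧ HasCompactSupport (ut u t) := by
  obtain ⟨hu, -, -, -, -, -, -, -, hvanish⟩ := h
  -- `u` is only known to vanish on `[0, t + 1]` in time, so at `t = 0` only a one-sided
  -- derivative argument is available.
  obtain ⟨R, -, hR⟩ := hvanish (t + 1) (by linarith)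
  refine ⟨hasCompactSupport_of_forall_le_abs fun x hx => hR t ⟨ht, by linarith⟩ x hx,
    hasCompactSupport_of_forall_le_abs (R := R) fun x hx =>
      deriv_eq_zero_of_eventuallyEq_nhdsGE ?_ ?_⟩
  · exact (hasDerivAt_time_slice (hu.of_le (by norm_num)) t x).differentiableAt
  · filter_upwards [Ico_mem_nhdsGE (lt_add_one t)] with s hs
    exact hR s ⟨ht.trans hs.1, hs.2.le⟩ x hx

lemma sq_div_four_le_damping_add_potential {a V : ℝ → ℝ} {L ε₁ k : ℝ} (hε₁ : 0 ≤ ε₁)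
    (ha_nonneg : ∀ x, 0 ≤ a x) (ha_eff : ∀ x, L ≤ |x| → ε₁ ≤ a x)
    (hV : Differentiable ℝ V) (hV_pos : ∀ x, 0 < V x) (hV' : ∀ x, deriv V x * x ≤ 0)
    (hk₀ : 0 ≤ k) (hk : ε₁ ^ 2 / 4 ≤ k * min (V L) (V (-L))) (x : ℝ) :
    ε₁ ^ 2 / 4 ≤ ε₁ / 4 * a x + k * V x := by
  rcases le_or_gt L |x| with hx | hx
  · nlinarith [ha_eff x hx, mul_nonneg hk₀ (hV_pos x).le]
  · nlinarith [mul_le_mul_of_nonneg_left (min_le_of_deriv_mul_self_nonpos hV hV' hx.le) hk₀,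
      mul_nonneg hε₁ (ha_nonneg x)]

theorem lemma_2_4_general
    (a V : ℝ → ℝ) (L ε₁ : ℝ)
    (hL : 0 < L) (hε₁ : 0 < ε₁)
    (ha_cont : Continuous a) (ha_nonneg : ∀ x, 0 ≤ a x)
    (ha_eff : ∀ x : ℝ, L ≤ |x| → ε₁ ≤ a x)
    (hV : ContDiff ℝ 1 V) (hV_pos : ∀ x, 0 < V x)
    (hV2 : ∀ x, deriv V x * x ≤ 0) :
    ∃ k₀ : ℝ, 2 ≤ k₀ ∧
      ∀ k ≥ k₀, ∀ (u : ℝ → ℝ → ℝ) (u₀ u₁ : ℝ → ℝ),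
        IsSmoothSolution V a u u₀ u₁ →
        ∀ t ≥ (0:ℝ), 0 ≤ Gk V a L ε₁ k u t := by
  have hVL : 0 < min (V L) (V (-L)) := lt_min (hV_pos L) (hV_pos (-L))
  refine ⟨max 2 (max (L * ε₁ + 1 / 4) (ε₁ ^ 2 / 4 / min (V L) (V (-L)))), le_max_left _ _, ?_⟩
  intro k hk u u₀ u₁ hsol t ht
  have hk₀ : 0 ≤ k := zero_le_two.trans ((le_max_left _ _).trans hk)
  have hk₁ : L * ε₁ + 1 / 4 ≤ k := (le_max_left _ _).trans ((le_max_right _ _).trans hk)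
  have hk₂ : ε₁ ^ 2 / 4 ≤ k * min (V L) (V (-L)) :=
    (div_le_iff₀ hVL).mp ((le_max_right _ _).trans ((le_max_right _ _).trans hk))
  have hu : ContDiff ℝ 1 fun p : ℝ × ℝ => u p.1 p.2 := hsol.1.of_le (by norm_num)
  obtain ⟨hw, hf⟩ := hsol.hasCompactSupport_slices ht
  rw [Gk_eq_integral hL.le hε₁.le ha_cont hV.continuous
    (hu.continuous.comp (Continuous.prodMk_right t)) hw (continuous_ut hu t) hf
    (continuous_ux hu t) hw.deriv]
  refine integral_nonneg fun x => ?_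
  simpa only [mul_assoc, Pi.zero_apply] using
    integrand_Gk_nonneg (abs_phi_mul_self_le hL.le hε₁.le x) hk₁
    (sq_div_four_le_damping_add_potential hε₁.le ha_nonneg ha_eff
      (hV.differentiable one_ne_zero) hV_pos hV2 hk₀ hk₂ x)

/-- **Lemma 2.4 (positivity of `G_k`).** Under (A.1), (A.2), (V.1), (V.2), with
`α = ε₁/4`, there exists `k₀ ≥ 2` such that for all `k ≥ k₀` and every smooth
classical solution `u` with smooth compactly supported data, `G_k(t) ≥ 0` for all
`t ≥ 0`. -/
theorem lemma_2_4
    (a V : ℝ → ℝ) (L ε₁ : ℝ)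
    (hL : 0 < L) (hε₁ : 0 < ε₁)
    (ha_cont : Continuous a) (ha_bdd : ∃ M, ∀ x, |a x| ≤ M) (ha_nonneg : ∀ x, 0 ≤ a x)
    (ha_eff : ∀ x : ℝ, L ≤ |x| → ε₁ ≤ a x)
    (hV : ContDiff ℝ 1 V) (hV_bdd : ∃ M, ∀ x, |V x| ≤ M)
    (hV'_bdd : ∃ M, ∀ x, |deriv V x| ≤ M) (hV_pos : ∀ x, 0 < V x)
    (hV2 : ∀ x, deriv V x * x ≤ 0) :
    ∃ k₀ : ℝ, 2 ≤ k₀ ∧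
      ∀ k ≥ k₀, ∀ (u : ℝ → ℝ → ℝ) (u₀ u₁ : ℝ → ℝ),
        IsSmoothSolution V a u u₀ u₁ →
        ∀ t ≥ (0:ℝ), 0 ≤ Gk V a L ε₁ k u t :=
  lemma_2_4_general a V L ε₁ hL hε₁ ha_cont ha_nonneg ha_eff hV hV_pos hV2
end
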